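/- Let n ≥ 7 and let i, j, k be integers with 2 ≤ i ≤ n-5, i+2 < j < n and j+1 < k ≤ n, and set z = (i-1, i)(j-1, k) ∈ S_n. Then s_{k-1}s_{k-2}⋯s_j is a reduced expression (of length k-j), and the strong right Bruhat walk of length k-j whose t-th entry is z·s_{k-1}s_{k-2}⋯s_{k-t+1} for 1 ≤ t ≤ k-j (so its entries are z, zs_{k-1}, zs_{k-1}s_{k-2}, …, zs_{k-1}s_{k-2}⋯s_{j+1}) is compatible with this reduced expression. -/
import Mathlib


/-- The longest element `w₀` of the symmetric group on `Fin n`,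
sending `t` to `n - 1 - t` (`0`-based), i.e. `t ↦ n + 1 - t` in `1`-based terms. -/
def w0 (n : ℕ) : Equiv.Perm (Fin n) :=
  ⟨Fin.rev, Fin.rev, fun x => Fin.rev_rev x, fun x => Fin.rev_rev x⟩

/-- The Coxeter length of a permutation: its number of inversions. -/
def len {n : ℕ} (x : Equiv.Perm (Fin n)) : ℕ :=
  (Finset.univ.filter fun ab : Fin n × Fin n => ab.1 < ab.2 ∧ x ab.2 < x ab.1).card

/-- The pattern `p ∈ S_m` consecutively appears in `x ∈ S_n` at (`1`-based) position `i`.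
Permutations of `{1, …, N}` are modelled (`0`-based) as permutations of `Fin N`. -/
def consecAppearsAt {m n : ℕ} (p : Equiv.Perm (Fin m)) (x : Equiv.Perm (Fin n)) (i : ℕ) :
    Prop :=
  ∃ h : 1 ≤ i ∧ i + m ≤ n + 1,
    ∀ a b : Fin m,
      p a < p b ↔
        x ⟨i - 1 + a.val, by have := a.isLt; omega⟩ <
          x ⟨i - 1 + b.val, by have := b.isLt; omega⟩

/-- `x` consecutively contains the pattern `p`. -/
def consecContains {m n : ℕ} (p : Equiv.Perm (Fin m)) (x : Equiv.Perm (Fin n)) : Prop :=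
  ∃ i : ℕ, consecAppearsAt p x i

/-- The pattern `2143 ∈ S₄` (`0`-based one-line notation: `1,0,3,2`). -/
def p2143 : Equiv.Perm (Fin 4) := Equiv.swap 0 1 * Equiv.swap 2 3

/-- The pattern `14325 ∈ S₅` (`0`-based one-line notation: `0,3,2,1,4`). -/
def p14325 : Equiv.Perm (Fin 5) := Equiv.swap 1 3

/-- The pattern `1536247 ∈ S₇` (`0`-based one-line notation: `0,4,2,5,1,3,6`). -/
def p1536247 : Equiv.Perm (Fin 7) := Equiv.swap 1 4 * Equiv.swap 3 5

/-- The pattern `1462537 ∈ S₇` (`0`-based one-line notation: `0,3,5,1,4,2,6`). -/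
def p1462537 : Equiv.Perm (Fin 7) := Equiv.swap 1 3 * Equiv.swap 2 5

/-- The pattern `1423 ∈ S₄` (`0`-based one-line notation: `0,3,1,2`). -/
def p1423 : Equiv.Perm (Fin 4) := Equiv.swap 1 2 * Equiv.swap 1 3

/-- The pattern `2314 ∈ S₄` (`0`-based one-line notation: `1,2,0,3`). -/
def p2314 : Equiv.Perm (Fin 4) := Equiv.swap 0 2 * Equiv.swap 0 1

/-- The simple transposition `s_t = (t, t+1)` (`1`-based) as a permutation of `Fin n`
(junk value `1` if `t` is out of range). -/
def simpleT (n t : ℕ) : Equiv.Perm (Fin n) :=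
  if h : 1 ≤ t ∧ t < n then Equiv.swap ⟨t - 1, by omega⟩ ⟨t, h.2⟩ else 1

/-- The product `s_a s_{a-1} ⋯ s_b` of simple transpositions with descending indices
(the identity if `b > a`). -/
def descProd (n a b : ℕ) : Equiv.Perm (Fin n) :=
  ((List.range (a + 1 - b)).map fun t => simpleT n (a - t)).prod

/-- The product `s_a s_{a+1} ⋯ s_b` of simple transpositions with ascending indices
(the identity if `b < a`). -/
def ascProd (n a b : ℕ) : Equiv.Perm (Fin n) :=
  ((List.range (b + 1 - a)).map fun t => simpleT n (a + t)).prod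

/-- `w s_b < w`, i.e. `s_b` is a right descent of `w`: `w(b) > w(b+1)` (`1`-based). -/
def rdes {n : ℕ} (w : Equiv.Perm (Fin n)) (b : ℕ) : Prop :=
  ∃ h : 1 ≤ b ∧ b < n, w ⟨b, h.2⟩ < w ⟨b - 1, by omega⟩

/-- `w s_b > w`, i.e. `s_b` is a right ascent of `w`: `w(b) < w(b+1)` (`1`-based). -/
def rasc {n : ℕ} (w : Equiv.Perm (Fin n)) (b : ℕ) : Prop :=
  ∃ h : 1 ≤ b ∧ b < n, w ⟨b - 1, by omega⟩ < w ⟨b, h.2⟩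

/-- `(W 1, …, W l)` is a strong right Bruhat walk: consecutive entries differ by right
multiplication by a simple transposition. -/
def isWalk {n : ℕ} (l : ℕ) (W : ℕ → Equiv.Perm (Fin n)) : Prop :=
  ∀ t : ℕ, 1 ≤ t → t + 1 ≤ l → ∃ b : ℕ, 1 ≤ b ∧ b < n ∧ W (t + 1) = W t * simpleT n b

/-- The walk `(W 1, …, W l)` is compatible with the reduced expression
`s_{ι 1} s_{ι 2} ⋯ s_{ι l}`. -/
def compat {n : ℕ} (l : ℕ) (ι : ℕ → ℕ) (W : ℕ → Equiv.Perm (Fin n)) : Prop :=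
  ∀ t : ℕ, 1 ≤ t → t ≤ l →
    rdes (W t) (ι t) ∧
    (2 ≤ t → rasc (W t) (ι (t - 1))) ∧
    (t + 1 ≤ l → rasc (W t) (ι (t + 1)))

/-- Membership in `X_{m,n}^i`: the one-line values at positions `i, i+1, …, i+m-1`
(`1`-based) are increasing. -/
def windowIncr {n : ℕ} (m i : ℕ) (x : Equiv.Perm (Fin n)) : Prop :=
  ∀ a b : Fin n, i - 1 ≤ a.val → a < b → b.val < i - 1 + m → x a < x b

/-- The order-preserving identification of `Fin m` with the window
`{o, o+1, …, o+m-1}` inside `Fin n`. -/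
def shiftEquiv (o m n : ℕ) (h : o + m ≤ n) :
    Fin m ≃ {x : Fin n // o ≤ x.val ∧ x.val < o + m} where
  toFun a := ⟨⟨o + a.val, by have := a.isLt; omega⟩, by
    refine ⟨Nat.le_add_right _ _, ?_⟩
    show o + a.val < o + m
    have := a.isLt; omega⟩
  invFun x := ⟨x.val.val - o, by have := x.prop; omega⟩
  left_inv a := by
    apply Fin.ext
    show o + a.val - o = a.val
    omega
  right_inv x := by
    apply Subtype.ext
    apply Fin.ext
    show o + (x.val.val - o) = x.val.val
    have := x.prop
    omega

/-- The shift `F_{m,n}^i : S_m → S_n`, sending `i+a-1 ↦ i+p(a)-1` (`1`-based) and fixing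
all other points. -/
def shiftPerm (m n i : ℕ) (h : i - 1 + m ≤ n) (p : Equiv.Perm (Fin m)) :
    Equiv.Perm (Fin n) :=
  Equiv.Perm.extendDomain p (shiftEquiv (i - 1) m n h)

lemma simpleT_apply (n t : ℕ) (h1 : 1 ≤ t) (h2 : t < n) (x : Fin n) :
    simpleT n t x = if x.val = t - 1 then ⟨t, h2⟩
      else if x.val = t then ⟨t - 1, by omega⟩ else x := by
  unfold simpleT
  rw [dif_pos ⟨h1, h2⟩]
  by_cases hx1 : x.val = t - 1
  · rw [if_pos hx1, show x = (⟨t - 1, by omega⟩ : Fin n) from Fin.ext hx1,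
      Equiv.swap_apply_left]
  · by_cases hx2 : x.val = t
    · rw [if_neg hx1, if_pos hx2, show x = (⟨t, h2⟩ : Fin n) from Fin.ext hx2,
        Equiv.swap_apply_right]
    · rw [if_neg hx1, if_neg hx2,
        Equiv.swap_apply_of_ne_of_ne (fun hh => hx1 (congrArg Fin.val hh))
          (fun hh => hx2 (congrArg Fin.val hh))]

lemma descProd_nil (n a b : ℕ) (h : a + 1 ≤ b) : descProd n a b = 1 := by
  unfold descProd
  rw [show a + 1 - b = 0 by omega]
  simp

lemma descProd_top (n a b : ℕ) (hb : 1 ≤ b) (h : b ≤ a) :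
    descProd n a b = simpleT n a * descProd n (a - 1) b := by
  unfold descProd
  rw [show a + 1 - b = (a - 1 + 1 - b) + 1 by omega, List.range_succ_eq_map]
  simp only [List.map_cons, List.map_map, List.prod_cons, Nat.sub_zero]
  have : ((fun t => simpleT n (a - t)) ∘ Nat.succ) = fun t => simpleT n (a - 1 - t) := by
    funext t
    simp only [Function.comp_apply]
    congr 1
    omega
  rw [this]

lemma descProd_peel (n a b : ℕ) (h : b ≤ a) :
    descProd n a b = descProd n a (b + 1) * simpleT n b := by
  unfold descProd
  rw [show a + 1 - b = (a + 1 - (b + 1)) + 1 by omega, List.range_succ, List.map_append,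
    List.prod_append]
  simp only [List.map_cons, List.map_nil, List.prod_cons, List.prod_nil, mul_one]
  congr 2
  omega

lemma descProd_apply (n a b : ℕ) (hb : 1 ≤ b) (ha : a < n) (hba : b ≤ a + 1) (x : Fin n) :
    (descProd n a b) x = if x.val = b - 1 then ⟨a, ha⟩
      else if b ≤ x.val ∧ x.val ≤ a then ⟨x.val - 1, by omega⟩ else x := by
  induction a with
  | zero =>
    rw [descProd_nil n 0 b (by omega)]
    have hb1 : b = 1 := by omega
    subst hb1
    simp only [Equiv.Perm.one_apply]
    split_ifs with h1 h2
    · exact Fin.ext (by simp <;> omega)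
    · omega
    · rfl
  | succ a ih =>
    rcases Nat.lt_or_ge (a + 1) b with hlt | hge
    · rw [descProd_nil n (a + 1) b (by omega)]
      simp only [Equiv.Perm.one_apply]
      split_ifs with h1 h2
      · exact Fin.ext (by simp <;> omega)
      · omega
      · rfl
    · rw [descProd_top n (a + 1) b hb hge, Equiv.Perm.mul_apply,
        Nat.add_sub_cancel,
        ih (by omega) (by omega),
        simpleT_apply n (a + 1) (by omega) ha]
      have hx := x.isLt
      split_ifs with h1 h2 h3 h4 h5 h6 h7 h8 <;>
        first
        | rfl
        | omega
        | (exact Fin.ext (by simp_all <;> omega))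
        | (simp_all <;> omega)

lemma fin_mk_val (n v : ℕ) (h : v < n) : ((⟨v, h⟩ : Fin n) : ℕ) = v := rfl

theorem stmt13 (n i j k : ℕ) (hn : 7 ≤ n) (hi : 2 ≤ i) (hi' : i ≤ n - 5)
    (hij : i + 2 < j) (hj : j < n) (hjk : j + 1 < k) (hk : k ≤ n)
    (z : Equiv.Perm (Fin n))
    (hz : z = Equiv.swap ⟨i - 2, by omega⟩ ⟨i - 1, by omega⟩ *
              Equiv.swap ⟨j - 2, by omega⟩ ⟨k - 1, by omega⟩) :
    len (descProd n (k - 1) j) = k - j ∧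
    isWalk (k - j) (fun t => z * descProd n (k - 1) (k - t + 1)) ∧
    compat (k - j) (fun t => k - t) (fun t => z * descProd n (k - 1) (k - t + 1)) := by
  have hz1 : z ⟨k - 1, by omega⟩ = ⟨j - 2, by omega⟩ := by
    rw [hz]
    simp only [Equiv.Perm.mul_apply]
    have e1 : (Equiv.swap (⟨j - 2, by omega⟩ : Fin n) ⟨k - 1, by omega⟩) ⟨k - 1, by omega⟩ =
        ⟨j - 2, by omega⟩ := Equiv.swap_apply_right _ _
    rw [e1]
    exact Equiv.swap_apply_of_ne_of_ne (by simp only [ne_eq, Fin.ext_iff, fin_mk_val]; omega)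
      (by simp only [ne_eq, Fin.ext_iff, fin_mk_val]; omega)
  have hzfix : ∀ (v : ℕ) (hv : v < n), i - 1 < v → v ≠ j - 2 → v ≠ k - 1 →
      z ⟨v, hv⟩ = ⟨v, hv⟩ := by
    intro v hv h1 h2 h3
    rw [hz]
    simp only [Equiv.Perm.mul_apply]
    have e1 : (Equiv.swap (⟨j - 2, by omega⟩ : Fin n) ⟨k - 1, by omega⟩) ⟨v, hv⟩ = ⟨v, hv⟩ :=
      Equiv.swap_apply_of_ne_of_ne (by simp only [ne_eq, Fin.ext_iff, fin_mk_val]; omega)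
        (by simp only [ne_eq, Fin.ext_iff, fin_mk_val]; omega)
    rw [e1]
    exact Equiv.swap_apply_of_ne_of_ne (by simp only [ne_eq, Fin.ext_iff, fin_mk_val]; omega)
      (by simp only [ne_eq, Fin.ext_iff, fin_mk_val]; omega)
  refine ⟨?_, ?_, ?_⟩
  · -- length
    have key : ∀ x : Fin n, descProd n (k - 1) j x = if x.val = j - 1 then ⟨k - 1, by omega⟩
        else if j ≤ x.val ∧ x.val ≤ k - 1 then ⟨x.val - 1, by omega⟩ else x :=
      fun x => descProd_apply n (k - 1) j (by omega) (by omega) (by omega) x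
    unfold len
    have hset : (Finset.univ.filter fun ab : Fin n × Fin n =>
          ab.1 < ab.2 ∧ descProd n (k - 1) j ab.2 < descProd n (k - 1) j ab.1) =
        ({⟨j - 1, by omega⟩} : Finset (Fin n)) ×ˢ
          Finset.Icc (⟨j, by omega⟩ : Fin n) ⟨k - 1, by omega⟩ := by
      ext ⟨p, q⟩
      simp only [Finset.mem_filter, Finset.mem_univ, true_and, Finset.mem_product,
        Finset.mem_singleton, Finset.mem_Icc]
      simp only [key]
      simp only [Fin.lt_def, Fin.le_def, Fin.ext_iff, fin_mk_val]
      have hp := p.isLt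
      have hq := q.isLt
      split_ifs <;> first | omega | (simp only [fin_mk_val]; omega)
    rw [hset, Finset.card_product, Finset.card_singleton, Fin.card_Icc, fin_mk_val, fin_mk_val]
    omega
  · -- walk
    intro t ht htl
    refine ⟨k - t, by omega, by omega, ?_⟩
    simp only
    rw [show k - (t + 1) + 1 = k - t by omega, descProd_peel n (k - 1) (k - t) (by omega),
      mul_assoc]
  · -- compat
    intro t ht1 ht2
    have hD : ∀ x : Fin n, descProd n (k - 1) (k - t + 1) x =
        if x.val = k - t + 1 - 1 then ⟨k - 1, by omega⟩
        else if k - t + 1 ≤ x.val ∧ x.val ≤ k - 1 then ⟨x.val - 1, by omega⟩ else x :=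
      fun x => descProd_apply n (k - 1) (k - t + 1) (by omega) (by omega) (by omega) x
    refine ⟨⟨⟨show 1 ≤ k - t by omega, show k - t < n by omega⟩, ?_⟩,
      fun ht3 => ⟨⟨show 1 ≤ k - (t - 1) by omega, show k - (t - 1) < n by omega⟩, ?_⟩,
      fun ht4 => ⟨⟨show 1 ≤ k - (t + 1) by omega, show k - (t + 1) < n by omega⟩, ?_⟩⟩
    · -- b
      beta_reduce
      simp only [Equiv.Perm.mul_apply]
      simp only [hD, fin_mk_val, Nat.add_sub_cancel]
      have c2 : (k - t - 1 = k - t) = False := eq_false (by omega)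
      have c3 : (k - t + 1 ≤ k - t - 1 ∧ k - t - 1 ≤ k - 1) = False := eq_false (by omega)
      have c4 : z ⟨k - t - 1, by omega⟩ = ⟨k - t - 1, by omega⟩ :=
        hzfix (k - t - 1) (by omega) (by omega) (by omega) (by omega)
      simp only [c2, c3, eq_self_iff_true, if_true, if_false, hz1, c4, Fin.lt_def, fin_mk_val]
      omega
    · -- rasc at k - (t-1)
      beta_reduce
      simp only [Equiv.Perm.mul_apply]
      simp only [hD, fin_mk_val, Nat.add_sub_cancel]
      have c1 : (k - (t - 1) - 1 = k - t) = True := eq_true (by omega)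
      have c2 : (k - (t - 1) = k - t) = False := eq_false (by omega)
      have c3 : (k - t + 1 ≤ k - (t - 1) ∧ k - (t - 1) ≤ k - 1) = True := eq_true (by omega)
      have c4 : z ⟨k - (t - 1) - 1, by omega⟩ = ⟨k - (t - 1) - 1, by omega⟩ :=
        hzfix (k - (t - 1) - 1) (by omega) (by omega) (by omega) (by omega)
      simp only [c1, c2, c3, if_true, if_false, hz1, c4, Fin.lt_def, fin_mk_val]
      omega
    · -- rasc at k - (t+1)
      beta_reduce
      simp only [Equiv.Perm.mul_apply]
      simp only [hD, fin_mk_val, Nat.add_sub_cancel]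
      have c1 : (k - (t + 1) - 1 = k - t) = False := eq_false (by omega)
      have c2 : (k - t + 1 ≤ k - (t + 1) - 1 ∧ k - (t + 1) - 1 ≤ k - 1) = False :=
        eq_false (by omega)
      have c3 : (k - (t + 1) = k - t) = False := eq_false (by omega)
      have c4 : (k - t + 1 ≤ k - (t + 1) ∧ k - (t + 1) ≤ k - 1) = False := eq_false (by omega)
      have c5 : z ⟨k - (t + 1) - 1, by omega⟩ = ⟨k - (t + 1) - 1, by omega⟩ :=
        hzfix (k - (t + 1) - 1) (by omega) (by omega) (by omega) (by omega)
      have c6 : z ⟨k - (t + 1), by omega⟩ = ⟨k - (t + 1), by omega⟩ :=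
        hzfix (k - (t + 1)) (by omega) (by omega) (by omega) (by omega)
      simp only [c1, c2, c3, c4, if_false, c5, c6, Fin.lt_def, fin_mk_val]
      omega
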